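/- The set DO(M) of degree orderings of K[X] is a closed subset of TO(M), and hence DO(M) is compact. -/

import Mathlib

/-- A binary relation is a total ordering: antisymmetric, transitive, and total. -/
def IsTotalOrdering {S : Type*} (r : S → S → Prop) : Prop :=
  (∀ a b, r a b → r b a → a = b) ∧ (∀ a b c, r a b → r b c → r a c) ∧ (∀ a b, r a b ∨ r b a)

/-- The set `TO(S)` of all total orderings on `S`. -/
def TO (S : Type*) : Type _ := {r : S → S → Prop // IsTotalOrdering r}

/-- The topology `𝒰(S)` on `TO(S)`, generated by the subbasis of all sets
`U_{(a,b)} = {≤ ∈ TO(S) : a ≤ b}`. -/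
instance TOTopology (S : Type*) : TopologicalSpace (TO S) :=
  TopologicalSpace.generateFrom {U | ∃ a b : S, U = {r : TO S | r.1 a b}}
/-- Monomials of `K[X_1,…,X_t]`, identified with their exponent vectors `ν ∈ ℕ^t`. -/
abbrev Mon (t : ℕ) := Fin t →₀ ℕ

/-- `LM` is a leading-monomial function: for each total ordering `r` on monomials and each
nonzero polynomial `p`, `LM r p` is the `r`-maximal element of the support of `p`. -/
def IsLM (K : Type*) [Field K] (t : ℕ)
    (LM : TO (Mon t) → MvPolynomial (Fin t) K → Mon t) : Prop :=
  ∀ (r : TO (Mon t)) (p : MvPolynomial (Fin t) K), p ≠ 0 →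
    LM r p ∈ p.support ∧ ∀ m ∈ p.support, r.1 m (LM r p)

/-- The leading monomial ideal `LM_≤(E)` of a subset `E ⊆ K[X]`: the ideal generated by the
leading monomials of the nonzero elements of `E`. -/
noncomputable def LMideal (K : Type*) [Field K] (t : ℕ)
    (LM : TO (Mon t) → MvPolynomial (Fin t) K → Mon t)
    (r : TO (Mon t)) (E : Set (MvPolynomial (Fin t) K)) : Ideal (MvPolynomial (Fin t) K) :=
  Ideal.span {q | ∃ e ∈ E, e ≠ 0 ∧ q = MvPolynomial.monomial (LM r e) (1 : K)}

/-- `DO(M)`: the set of degree orderings on the monomials of `K[X]`, i.e. total orderings `≤`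
with `deg(LM_≤(p)) = deg(p)` for every nonzero polynomial `p`. -/
def DOset (K : Type*) [Field K] (t : ℕ)
    (LM : TO (Mon t) → MvPolynomial (Fin t) K → Mon t) : Set (TO (Mon t)) :=
  {r | ∀ p : MvPolynomial (Fin t) K, p ≠ 0 →
    ((LM r p).sum fun _ e => e) = p.totalDegree}


/-! Every `r ↦ LM_r(p)` is locally constant on `TO(M)`: it is `m` exactly on the open set of
orderings making `m` the largest of the finitely many monomials of `p`. So the degree condition
cuts out an intersection of clopen sets, and `TO(M)` itself is compact because the ultrafilter
limit of orderings, `a ≤ b :↔ U_{(a,b)} ∈ F`, is again a total ordering. -/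

namespace TO

variable {S : Type*}

lemma isOpen_setOf_rel (a b : S) : IsOpen {r : TO S | r.1 a b} :=
  TopologicalSpace.isOpen_generateFrom_of_mem ⟨a, b, rfl⟩

def ofUltrafilter (F : Ultrafilter (TO S)) : TO S where
  val a b := {r : TO S | r.1 a b} ∈ F
  property := by
    refine ⟨fun a b hab hba => ?_, fun a b c hab hbc => ?_, fun a b => ?_⟩
    · obtain ⟨r, hrab, hrba⟩ := F.nonempty_of_mem (F.inter_mem hab hba)
      exact r.2.1 a b hrab hrba
    · exact F.mem_of_superset (F.inter_mem hab hbc) fun r ⟨hrab, hrbc⟩ => r.2.2.1 a b c hrab hrbc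
    · refine (em _).imp_right fun hab => F.mem_of_superset (F.compl_mem_iff_notMem.2 hab) ?_
      exact fun r hr => (r.2.2.2 a b).resolve_left hr

lemma ultrafilter_le_nhds_ofUltrafilter (F : Ultrafilter (TO S)) :
    (F : Filter (TO S)) ≤ nhds (ofUltrafilter F) := by
  rw [TOTopology, TopologicalSpace.nhds_generateFrom]
  refine le_iInf₂ ?_
  rintro _ ⟨hF, a, b, rfl⟩
  exact Filter.le_principal_iff.2 hF

instance : CompactSpace (TO S) :=
  ⟨isCompact_iff_ultrafilter_le_nhds.2 fun F _ =>
    ⟨ofUltrafilter F, trivial, ultrafilter_le_nhds_ofUltrafilter F⟩⟩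

lemma isLocallyConstant_of_isGreatest (s : Finset S) (L : TO S → S)
    (hL : ∀ r, L r ∈ s ∧ ∀ m ∈ s, r.1 m (L r)) : IsLocallyConstant L := by
  refine IsLocallyConstant.iff_isOpen_fiber_apply.2 fun r₀ => ?_
  have hfiber : L ⁻¹' {L r₀} = ⋂ m ∈ (s : Set S), {r : TO S | r.1 m (L r₀)} := by
    ext r
    simp only [Set.mem_preimage, Set.mem_singleton_iff, Set.mem_iInter, Set.mem_ofPred_eq]
    refine ⟨fun h m hm => h ▸ (hL r).2 m hm, fun h => ?_⟩
    exact r.2.1 _ _ (h _ (hL r).1) ((hL r).2 _ (hL r₀).1)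
  rw [hfiber]
  exact s.finite_toSet.isOpen_biInter fun m _ => isOpen_setOf_rel m (L r₀)

end TO

lemma isLocallyConstant_LM {K : Type*} [Field K] {t : ℕ}
    {LM : TO (Mon t) → MvPolynomial (Fin t) K → Mon t} (hLM : IsLM K t LM)
    {p : MvPolynomial (Fin t) K} (hp : p ≠ 0) : IsLocallyConstant fun r => LM r p :=
  TO.isLocallyConstant_of_isGreatest p.support _ fun r => hLM r p hp

theorem DOset_isClosed_isCompact_general (K : Type*) [Field K] (t : ℕ)
    (LM : TO (Mon t) → MvPolynomial (Fin t) K → Mon t) (hLM : IsLM K t LM) :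
    IsClosed (DOset K t LM) ∧ IsCompact (DOset K t LM) := by
  have hclosed : IsClosed (DOset K t LM) := by
    simp only [DOset, Set.ofPred_forall]
    refine isClosed_iInter fun p => isClosed_iInter fun hp => ?_
    exact ((isLocallyConstant_LM hLM hp).comp fun m => m.sum fun _ e => e).isClosed_fiber _
  exact ⟨hclosed, hclosed.isCompact⟩

/-- `DO(M)` is a closed subset of `TO(M)`, and hence compact. -/
theorem DOset_isClosed_isCompact (K : Type*) [Field K] (t : ℕ) (ht : 1 ≤ t)
    (LM : TO (Mon t) → MvPolynomial (Fin t) K → Mon t) (hLM : IsLM K t LM) :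
    IsClosed (DOset K t LM) ∧ IsCompact (DOset K t LM) :=
  DOset_isClosed_isCompact_general K t LM hLM
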